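/- Let V be a real vector space with a symmetric bilinear form of signature (2, b). Then the set D^± = { [x] ∈ P(V ⊗ ℂ) : (x,x) = 0 and (x, x̄) > 0 } is a nonempty open subset of the quadric {(x,x)=0} in P(V ⊗ ℂ), and it has exactly two connected components when b ≥ 1. -/

import Mathlib

/-- A real symmetric matrix has signature `(p, q)`. -/
def HasSignature {k : ℕ} (M : Matrix (Fin k) (Fin k) ℝ) (p q : ℕ) : Prop :=
  p + q = k ∧ ∃ P : Matrix (Fin k) (Fin k) ℝ, IsUnit P.det ∧
    P.transpose * M * P = Matrix.diagonal (fun i : Fin k => if (i : ℕ) < p then (1 : ℝ) else -1)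

/-- The quotient topology on a projectivization (the underlying nonzero vectors carry the
subspace topology). -/
instance projectivizationTopology (K V : Type) [DivisionRing K] [AddCommGroup V] [Module K V]
    [TopologicalSpace V] : TopologicalSpace (Projectivization K V) :=
  inferInstanceAs (TopologicalSpace (Quotient (projectivizationSetoid K V)))

open Matrix Complex Topology
open scoped ComplexConjugate

namespace Stmt3Aux

noncomputable section

variable {n : ℕ}

instance (b : ℕ) : NeZero (2 + b) := ⟨by omega⟩

abbrev Vn (n : ℕ) := Fin n → ℂ
abbrev Pn (n : ℕ) := Projectivization ℂ (Vn n)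

/-- the bilinear form -/
def B (Mc : Matrix (Fin n) (Fin n) ℂ) (x y : Vn n) : ℂ := dotProduct x (Mc.mulVec y)

theorem B_smul_left (Mc : Matrix (Fin n) (Fin n) ℂ) (a : ℂ) (x y : Vn n) :
    B Mc (a • x) y = a * B Mc x y := by
  simp [B, smul_dotProduct]

theorem B_smul_right (Mc : Matrix (Fin n) (Fin n) ℂ) (a : ℂ) (x y : Vn n) :
    B Mc x (a • y) = a * B Mc x y := by
  simp [B, Matrix.mulVec_smul, dotProduct_smul]

theorem star_smul_fun (a : ℂ) (x : Vn n) : star (a • x) = (conj a) • star x := by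
  funext i
  simp [Pi.smul_apply]

theorem continuous_B_star (Mc : Matrix (Fin n) (Fin n) ℂ) :
    Continuous fun x : Vn n => B Mc x (star x) := by
  simp only [B, dotProduct, Matrix.mulVec]
  fun_prop

theorem continuous_mulVec (A : Matrix (Fin n) (Fin n) ℂ) :
    Continuous fun x : Vn n => A.mulVec x := by
  unfold Matrix.mulVec dotProduct
  fun_prop

/-- scaling behaviour of the hermitian expression -/
theorem B_star_smul (Mc : Matrix (Fin n) (Fin n) ℂ) (a : ℂ) (x : Vn n) :
    B Mc (a • x) (star (a • x)) = (normSq a : ℂ) * B Mc x (star x) := by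
  rw [star_smul_fun, B_smul_left, B_smul_right, ← mul_assoc, mul_comm a (conj a), mul_comm (conj a) a, Complex.mul_conj]


section Proj

theorem rep_spec (x : Vn n) (hx : x ≠ 0) :
    ∃ a : ℂˣ, (Projectivization.mk ℂ x hx).rep = (a : ℂ) • x := by
  have h := Projectivization.mk_rep (Projectivization.mk ℂ x hx)
  rw [Projectivization.mk_eq_mk_iff] at h
  obtain ⟨a, ha⟩ := h
  exact ⟨a, by rw [← ha, Units.smul_def]⟩

theorem isQuotientMap_pmk {n : ℕ} :
    IsQuotientMap ((@Quotient.mk' _ (projectivizationSetoid ℂ (Vn n))) :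
      {v : Vn n // v ≠ 0} → Pn n) :=
  isQuotientMap_quotient_mk'

theorem isOpen_invariant {S : Set (Vn n)} (hS : IsOpen S)
    (hinv : ∀ (x : Vn n) (a : ℂˣ), x ∈ S → (a : ℂ) • x ∈ S) :
    IsOpen {p : Pn n | p.rep ∈ S} := by
  refine (isQuotientMap_pmk (n := n)).isOpen_preimage.mp ?_
  have hset : ((@Quotient.mk' _ (projectivizationSetoid ℂ (Vn n))) :
        {v : Vn n // v ≠ 0} → Pn n) ⁻¹' {p : Pn n | p.rep ∈ S}
      = Subtype.val ⁻¹' S := by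
    ext ⟨x, hx⟩
    have hmk : (@Quotient.mk' _ (projectivizationSetoid ℂ (Vn n)) ⟨x, hx⟩) = Projectivization.mk ℂ x hx := rfl
    simp only [Set.mem_preimage, Set.mem_setOf_eq, hmk]
    obtain ⟨a, ha⟩ := rep_spec x hx
    constructor
    · intro h
      have h' : (Projectivization.mk ℂ x hx).rep ∈ S := h
      rw [ha] at h'
      have h2 := hinv _ a⁻¹ h'
      rwa [smul_smul, Units.inv_mul, one_smul] at h2
    · intro h
      show (Projectivization.mk ℂ x hx).rep ∈ S
      rw [ha]
      exact hinv x a h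
  exact hset ▸ hS.preimage continuous_subtype_val

theorem continuous_mk {X : Type*} [TopologicalSpace X] (f : X → Vn n) (hf : Continuous f)
    (h : ∀ t, f t ≠ 0) : Continuous fun t => Projectivization.mk ℂ (f t) (h t) :=
  continuous_quotient_mk'.comp (hf.subtype_mk h)

theorem mulVec_inj {A A' : Matrix (Fin n) (Fin n) ℂ} (h2 : A' * A = 1)
    (x : Vn n) (hx : A.mulVec x = 0) : x = 0 := by
  have : A'.mulVec (A.mulVec x) = x := by
    rw [Matrix.mulVec_mulVec, h2, Matrix.one_mulVec]
  rw [hx, Matrix.mulVec_zero] at this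
  exact this.symm

def pmap (A : Matrix (Fin n) (Fin n) ℂ) (hA : ∀ x : Vn n, A.mulVec x = 0 → x = 0) :
    Pn n → Pn n :=
  Quotient.map' (fun v => ⟨A.mulVec v.1, fun h => v.2 (hA _ h)⟩)
    (by
      intro v w h
      obtain ⟨u, hu⟩ := MulAction.mem_orbit_iff.mp h
      refine MulAction.mem_orbit_iff.mpr ⟨u, ?_⟩
      simp only
      rw [← hu, Units.smul_def, Units.smul_def, Matrix.mulVec_smul])

theorem pmap_mk (A : Matrix (Fin n) (Fin n) ℂ) (hA : ∀ x : Vn n, A.mulVec x = 0 → x = 0)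
    (x : Vn n) (hx : x ≠ 0) :
    pmap A hA (Projectivization.mk ℂ x hx)
      = Projectivization.mk ℂ (A.mulVec x) (fun h => hx (hA _ h)) := rfl

theorem continuous_pmap (A : Matrix (Fin n) (Fin n) ℂ)
    (hA : ∀ x : Vn n, A.mulVec x = 0 → x = 0) : Continuous (pmap A hA) :=
  Continuous.quotient_map' (((continuous_mulVec A).comp continuous_subtype_val).subtype_mk _) _

def pmapHomeo (A A' : Matrix (Fin n) (Fin n) ℂ) (h1 : A * A' = 1) (h2 : A' * A = 1) :
    Pn n ≃ₜ Pn n where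
  toFun := pmap A (fun x hx => mulVec_inj h2 x hx)
  invFun := pmap A' (fun x hx => mulVec_inj h1 x hx)
  left_inv := by
    intro p
    induction p using Projectivization.ind with
    | h x hx =>
      rw [pmap_mk, pmap_mk]
      have hv : A'.mulVec (A.mulVec x) = x := by
        rw [Matrix.mulVec_mulVec, h2, Matrix.one_mulVec]
      exact (Projectivization.mk_eq_mk_iff ℂ _ _ _ hx).mpr ⟨1, by simp [hv]⟩
  right_inv := by
    intro p
    induction p using Projectivization.ind with
    | h x hx =>
      rw [pmap_mk, pmap_mk]
      have hv : A.mulVec (A'.mulVec x) = x := by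
        rw [Matrix.mulVec_mulVec, h1, Matrix.one_mulVec]
      exact (Projectivization.mk_eq_mk_iff ℂ _ _ _ hx).mpr ⟨1, by simp [hv]⟩
  continuous_toFun := continuous_pmap A (fun x hx => mulVec_inj h2 x hx)
  continuous_invFun := continuous_pmap A' (fun x hx => mulVec_inj h1 x hx)

theorem pmapHomeo_mk (A A' : Matrix (Fin n) (Fin n) ℂ) (h1 : A * A' = 1) (h2 : A' * A = 1)
    (x : Vn n) (hx : x ≠ 0) :
    pmapHomeo A A' h1 h2 (Projectivization.mk ℂ x hx)
      = Projectivization.mk ℂ (A.mulVec x) (fun h => hx (mulVec_inj h2 _ h)) := rfl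

end Proj

section CC
variable {X Y : Type*} [TopologicalSpace X] [TopologicalSpace Y]

theorem cc_card_eq (e : X ≃ₜ Y) :
    Nat.card (ConnectedComponents X) = Nat.card (ConnectedComponents Y) := by
  have hf : Continuous ((↑) ∘ e : X → ConnectedComponents Y) :=
    ConnectedComponents.continuous_coe.comp e.continuous
  have hg : Continuous ((↑) ∘ e.symm : Y → ConnectedComponents X) :=
    ConnectedComponents.continuous_coe.comp e.symm.continuous
  refine Nat.card_eq_of_bijective hf.connectedComponentsLift
    (Function.bijective_iff_has_inverse.mpr ⟨hg.connectedComponentsLift, ?_, ?_⟩)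
  · intro c
    obtain ⟨x, rfl⟩ := ConnectedComponents.surjective_coe c
    simp [Continuous.connectedComponentsLift_apply_coe, Function.comp]
  · intro c
    obtain ⟨y, rfl⟩ := ConnectedComponents.surjective_coe c
    simp [Continuous.connectedComponentsLift_apply_coe, Function.comp]

theorem cc_card_two {A Bs : Set X} (hAB : ∀ x, x ∈ A ↔ x ∉ Bs)
    (hA : IsOpen A) (hB : IsOpen Bs) (hAc : IsPreconnected A) (hBc : IsPreconnected Bs)
    (hAne : A.Nonempty) (hBne : Bs.Nonempty) :
    Nat.card (ConnectedComponents X) = 2 := by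
  have hcompl : A = Bsᶜ := Set.ext fun x => by simpa using hAB x
  have hclopen : IsClopen A := ⟨by rw [hcompl]; exact hB.isClosed_compl, hA⟩
  have hcont : Continuous A.boolIndicator := (continuous_boolIndicator_iff_isClopen A).mpr hclopen
  have key : ∀ x y : X, A.boolIndicator x = A.boolIndicator y →
      (x : ConnectedComponents X) = y := by
    intro x y hxy
    rw [ConnectedComponents.coe_eq_coe]
    cases h : A.boolIndicator x with
    | true =>
      have hx : x ∈ A := (A.mem_iff_boolIndicator x).mpr h
      have hy : y ∈ A := (A.mem_iff_boolIndicator y).mpr (by rw [← hxy, h])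
      exact (connectedComponent_eq (hAc.subset_connectedComponent hy hx)).symm
    | false =>
      have hx : x ∈ Bs := by
        by_contra hbs
        exact absurd ((A.mem_iff_boolIndicator x).mp ((hAB x).mpr hbs)) (by rw [h]; simp)
      have hy : y ∈ Bs := by
        by_contra hbs
        have := (A.mem_iff_boolIndicator y).mp ((hAB y).mpr hbs)
        rw [← hxy, h] at this
        exact absurd this (by simp)
      exact (connectedComponent_eq (hBc.subset_connectedComponent hy hx)).symm
  have hbij : Function.Bijective hcont.connectedComponentsLift := by
    constructor
    · intro c d h
      obtain ⟨x, rfl⟩ := ConnectedComponents.surjective_coe c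
      obtain ⟨y, rfl⟩ := ConnectedComponents.surjective_coe d
      rw [Continuous.connectedComponentsLift_apply_coe,
        Continuous.connectedComponentsLift_apply_coe] at h
      exact key x y h
    · intro bb
      cases bb with
      | true =>
        obtain ⟨a, ha⟩ := hAne
        exact ⟨(a : ConnectedComponents X), by
          rw [Continuous.connectedComponentsLift_apply_coe]
          exact ((A.mem_iff_boolIndicator a).mp ha)⟩
      | false =>
        obtain ⟨a, ha⟩ := hBne
        refine ⟨(a : ConnectedComponents X), ?_⟩
        rw [Continuous.connectedComponentsLift_apply_coe]
        exact (A.notMem_iff_boolIndicator a).mp (fun h => (hAB a).mp h ha)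
  rw [Nat.card_eq_of_bijective _ hbij]
  simp [Nat.card_eq_fintype_card]

end CC

section Diag
variable {b : ℕ}

def dd (b : ℕ) : Fin (2 + b) → ℂ := fun i => if (i : ℕ) < 2 then 1 else -1

def Mdiag (b : ℕ) : Matrix (Fin (2 + b)) (Fin (2 + b)) ℂ := Matrix.diagonal (dd b)

def qf (x : Vn (2 + b)) : ℂ := ∑ i, dd b i * x i * x i

def ee (b : ℕ) : Fin (2 + b) → ℝ := fun i => if (i : ℕ) < 2 then 1 else -1

def hf (x : Vn (2 + b)) : ℝ := ∑ i, ee b i * normSq (x i)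

def tf (x : Vn (2 + b)) : ℝ := normSq (x 0 + I * x 1) - normSq (x 0 - I * x 1)

theorem val0 : ((0 : Fin (2 + b)) : ℕ) = 0 := rfl

theorem val1 : ((1 : Fin (2 + b)) : ℕ) = 1 := by
  have : (1 : Fin (2 + b)).val = 1 % (2 + b) := Fin.val_one' (2 + b)
  rw [this, Nat.mod_eq_of_lt (by omega)]

theorem fin0ne1 : (0 : Fin (2 + b)) ≠ 1 := by
  intro h
  have := congrArg (Fin.val) h
  rw [val0, val1] at this
  exact absurd this (by omega)

theorem fin01 (i : Fin (2 + b)) (h : (i : ℕ) < 2) : i = 0 ∨ i = 1 := by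
  rcases (by omega : (i : ℕ) = 0 ∨ (i : ℕ) = 1) with h0 | h1
  · exact Or.inl (Fin.ext (by rw [h0, val0]))
  · exact Or.inr (Fin.ext (by rw [h1, val1]))

theorem dd_0 : dd b 0 = 1 := by
  show (if ((0 : Fin (2 + b)) : ℕ) < 2 then (1 : ℂ) else -1) = 1
  rw [if_pos (by rw [val0]; omega)]

theorem dd_1 : dd b 1 = 1 := by
  show (if ((1 : Fin (2 + b)) : ℕ) < 2 then (1 : ℂ) else -1) = 1
  rw [if_pos (by rw [val1]; omega)]

theorem not_lt_two (i : Fin (2 + b)) (h0 : i ≠ 0) (h1 : i ≠ 1) : ¬ ((i : ℕ) < 2) :=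
  fun h => by rcases fin01 i h with h | h <;> simp_all

theorem dd_other (i : Fin (2 + b)) (h0 : i ≠ 0) (h1 : i ≠ 1) : dd b i = -1 := by
  show (if (i : ℕ) < 2 then (1 : ℂ) else -1) = -1
  rw [if_neg (not_lt_two i h0 h1)]

theorem ee_0 : ee b 0 = 1 := by
  show (if ((0 : Fin (2 + b)) : ℕ) < 2 then (1 : ℝ) else -1) = 1
  rw [if_pos (by rw [val0]; omega)]

theorem ee_1 : ee b 1 = 1 := by
  show (if ((1 : Fin (2 + b)) : ℕ) < 2 then (1 : ℝ) else -1) = 1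
  rw [if_pos (by rw [val1]; omega)]

theorem ee_other (i : Fin (2 + b)) (h0 : i ≠ 0) (h1 : i ≠ 1) : ee b i = -1 := by
  show (if (i : ℕ) < 2 then (1 : ℝ) else -1) = -1
  rw [if_neg (not_lt_two i h0 h1)]

theorem sum_split {α : Type*} [AddCommGroup α] (f g : Fin (2 + b) → α)
    (h : ∀ i, i ≠ 0 → i ≠ 1 → f i = g i) :
    ∑ i, f i = f 0 + f 1 - (g 0 + g 1) + ∑ i, g i := by
  have h1 : ∑ i, (f i - g i) = ∑ i ∈ ({0, 1} : Finset (Fin (2 + b))), (f i - g i) := by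
    refine (Finset.sum_subset (Finset.subset_univ _) ?_).symm
    intro i _ hi
    simp only [Finset.mem_insert, Finset.mem_singleton] at hi
    push_neg at hi
    rw [h i hi.1 hi.2, sub_self]
  rw [Finset.sum_sub_distrib, Finset.sum_pair fin0ne1] at h1
  have h2 : ∑ i, f i = (f 0 - g 0 + (f 1 - g 1)) + ∑ i, g i := by
    rw [← h1]; abel
  rw [h2]; abel

theorem qf_smul (a : ℂ) (x : Vn (2 + b)) : qf (a • x) = a ^ 2 * qf x := by
  unfold qf
  rw [Finset.mul_sum]
  refine Finset.sum_congr rfl fun i _ => ?_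
  simp only [Pi.smul_apply, smul_eq_mul]
  ring

theorem hf_smul (a : ℂ) (x : Vn (2 + b)) : hf (a • x) = normSq a * hf x := by
  unfold hf
  rw [Finset.mul_sum]
  refine Finset.sum_congr rfl fun i _ => ?_
  simp only [Pi.smul_apply, smul_eq_mul, Complex.normSq_mul]
  ring

theorem tf_smul (a : ℂ) (x : Vn (2 + b)) : tf (a • x) = normSq a * tf x := by
  unfold tf
  have e0 : (a • x) 0 + I * ((a • x) 1) = a * (x 0 + I * x 1) := by
    simp only [Pi.smul_apply, smul_eq_mul]; ring
  have e1 : (a • x) 0 - I * ((a • x) 1) = a * (x 0 - I * x 1) := by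
    simp only [Pi.smul_apply, smul_eq_mul]; ring
  rw [e0, e1, Complex.normSq_mul, Complex.normSq_mul]
  ring

theorem B_Mdiag (x y : Vn (2 + b)) : B (Mdiag b) x y = ∑ i, dd b i * x i * y i := by
  unfold B Mdiag dotProduct
  refine Finset.sum_congr rfl fun i _ => ?_
  rw [Matrix.mulVec_diagonal]
  ring

theorem B_Mdiag_self (x : Vn (2 + b)) : B (Mdiag b) x x = qf x := B_Mdiag x x

theorem B_Mdiag_star_re (x : Vn (2 + b)) : (B (Mdiag b) x (star x)).re = hf x := by
  rw [B_Mdiag, Complex.re_sum]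
  refine Finset.sum_congr rfl fun i _ => ?_
  have : x i * star x i = (normSq (x i) : ℂ) := by
    rw [Pi.star_apply, ← Complex.mul_conj]
    rfl
  rw [mul_assoc, this]
  unfold dd ee
  split_ifs <;> simp

theorem abs_qf_le (x : Vn (2 + b)) : ‖qf x‖ ≤ ∑ i, normSq (x i) := by
  refine le_trans (norm_sum_le _ _) (le_of_eq ?_)
  refine Finset.sum_congr rfl fun i _ => ?_
  rw [norm_mul, norm_mul]
  have habs : ‖dd b i‖ = 1 := by
    unfold dd; split_ifs <;> simp
  rw [habs, one_mul, ← Complex.sq_norm (x i)]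
  ring

theorem normSq_pair (z w : ℂ) :
    normSq (z + I * w) + normSq (z - I * w) = 2 * normSq z + 2 * normSq w := by
  simp only [Complex.normSq_apply, Complex.add_re, Complex.add_im, Complex.sub_re,
    Complex.sub_im, Complex.mul_re, Complex.mul_im, Complex.I_re, Complex.I_im]
  ring

theorem sq_add_sq_eq (z w : ℂ) : z ^ 2 + w ^ 2 = (z + I * w) * (z - I * w) := by
  linear_combination (w ^ 2) * Complex.I_mul_I

theorem qf_eq_of_eq_off (x y : Vn (2 + b)) (h : ∀ i, i ≠ 0 → i ≠ 1 → x i = y i) :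
    qf x = x 0 ^ 2 + x 1 ^ 2 - (y 0 ^ 2 + y 1 ^ 2) + qf y := by
  unfold qf
  rw [sum_split (fun i => dd b i * x i * x i) (fun i => dd b i * y i * y i)
    (fun i h0 h1 => by simp only [h i h0 h1])]
  rw [dd_0, dd_1]
  ring

theorem hf_eq_of_eq_off (x y : Vn (2 + b)) (h : ∀ i, i ≠ 0 → i ≠ 1 → x i = y i) :
    hf x = (normSq (x 0) + normSq (x 1)) - (normSq (y 0) + normSq (y 1)) + hf y := by
  unfold hf
  rw [sum_split (fun i => ee b i * normSq (x i)) (fun i => ee b i * normSq (y i))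
    (fun i h0 h1 => by simp only [h i h0 h1])]
  rw [ee_0, ee_1]
  ring

theorem hf_of_zero01 (y : Vn (2 + b)) (h0 : y 0 = 0) (h1 : y 1 = 0) :
    hf y = -∑ i, normSq (y i) := by
  unfold hf
  rw [sum_split (fun i => ee b i * normSq (y i))
    (fun i => -(normSq (y i))) (fun i hi0 hi1 => by
      simp only [ee_other i hi0 hi1]; ring)]
  rw [ee_0, ee_1, h0, h1]
  rw [← Finset.sum_neg_distrib]
  simp

def tl (x : Vn (2 + b)) : Vn (2 + b) := fun i => if i = 0 then 0 else if i = 1 then 0 else x i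

theorem tl_0 (x : Vn (2 + b)) : tl x 0 = 0 := if_pos rfl

theorem tl_1 (x : Vn (2 + b)) : tl x 1 = 0 := by
  unfold tl; rw [if_neg fin0ne1.symm, if_pos rfl]

theorem tl_other (x : Vn (2 + b)) (i : Fin (2 + b)) (h0 : i ≠ 0) (h1 : i ≠ 1) :
    tl x i = x i := by
  unfold tl; rw [if_neg h0, if_neg h1]

theorem abs_eq_normSq {z w : ℂ} (h : normSq z = normSq w) :
    ‖z * w‖ = normSq z := by
  rw [norm_mul, Complex.norm_def, Complex.norm_def, ← h,
    Real.mul_self_sqrt (Complex.normSq_nonneg z)]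

theorem tf_ne (x : Vn (2 + b)) (hq : qf x = 0) (hh : 0 < hf x) : tf x ≠ 0 := by
  intro ht
  have hab : normSq (x 0 + I * x 1) = normSq (x 0 - I * x 1) := by
    unfold tf at ht; linarith
  have hq2 : qf (tl x) = -((x 0 + I * x 1) * (x 0 - I * x 1)) := by
    have h1 := qf_eq_of_eq_off x (tl x) (fun i h0 h1 => (tl_other x i h0 h1).symm)
    rw [tl_0, tl_1, hq] at h1
    have h2 := sq_add_sq_eq (x 0) (x 1)
    linear_combination -h1 - h2
  have htri := abs_qf_le (tl x)
  have hhz := hf_of_zero01 (tl x) (tl_0 x) (tl_1 x)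
  have hfx := hf_eq_of_eq_off x (tl x) (fun i h0 h1 => (tl_other x i h0 h1).symm)
  rw [tl_0, tl_1] at hfx
  have hpair := normSq_pair (x 0) (x 1)
  have habs : ‖qf (tl x)‖ = normSq (x 0 + I * x 1) := by
    rw [hq2, norm_neg]
    exact abs_eq_normSq hab
  rw [habs] at htri
  simp only [Complex.normSq_zero] at hfx hhz
  linarith

def sv (y : Vn (2 + b)) : ℂ := -(qf y)

def vmap (y : Vn (2 + b)) : Vn (2 + b) :=
  fun i => if i = 0 then (1 + sv y) / 2 else if i = 1 then (sv y - 1) * I / 2 else y i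

theorem vmap_0 (y : Vn (2 + b)) : vmap y 0 = (1 + sv y) / 2 := if_pos rfl

theorem vmap_1 (y : Vn (2 + b)) : vmap y 1 = (sv y - 1) * I / 2 := by
  unfold vmap; rw [if_neg fin0ne1.symm, if_pos rfl]

theorem vmap_other (y : Vn (2 + b)) (i : Fin (2 + b)) (h0 : i ≠ 0) (h1 : i ≠ 1) :
    vmap y i = y i := by
  unfold vmap; rw [if_neg h0, if_neg h1]

theorem vmap_alpha (y : Vn (2 + b)) : vmap y 0 + I * vmap y 1 = 1 := by
  rw [vmap_0, vmap_1]
  linear_combination ((sv y - 1) / 2) * Complex.I_mul_I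

theorem vmap_beta (y : Vn (2 + b)) : vmap y 0 - I * vmap y 1 = sv y := by
  rw [vmap_0, vmap_1]
  linear_combination (-((sv y - 1) / 2)) * Complex.I_mul_I

theorem vmap_ne (y : Vn (2 + b)) : vmap y ≠ 0 := by
  intro h
  have h0 := congrFun h 0
  have h1 := congrFun h 1
  have := vmap_alpha y
  rw [h0, h1] at this
  simp at this

def Om (b : ℕ) : Set (Vn (2 + b)) :=
  {y | y 0 = 0 ∧ y 1 = 0 ∧ 2 * (∑ i, normSq (y i)) < 1 + normSq (qf y) ∧ normSq (qf y) < 1}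

theorem chart_mem {y : Vn (2 + b)} (hy : y ∈ Om b) :
    qf (vmap y) = 0 ∧ 0 < hf (vmap y) ∧ 0 < tf (vmap y) := by
  obtain ⟨h0, h1, hlt, hN⟩ := hy
  have hqv : qf (vmap y) = 0 := by
    have he := qf_eq_of_eq_off (vmap y) y (fun i hi0 hi1 => vmap_other y i hi0 hi1)
    have hfac := sq_add_sq_eq (vmap y 0) (vmap y 1)
    rw [vmap_alpha, vmap_beta, one_mul] at hfac
    rw [h0, h1, hfac] at he
    unfold sv at he
    linear_combination he
  refine ⟨hqv, ?_, ?_⟩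
  · have he := hf_eq_of_eq_off (vmap y) y (fun i hi0 hi1 => vmap_other y i hi0 hi1)
    have hz := hf_of_zero01 y h0 h1
    have hpair := normSq_pair (vmap y 0) (vmap y 1)
    rw [vmap_alpha, vmap_beta] at hpair
    have hsv : normSq (sv y) = normSq (qf y) := Complex.normSq_neg _
    rw [h0, h1] at he
    simp only [Complex.normSq_zero, Complex.normSq_one] at he hpair
    linarith
  · unfold tf
    rw [vmap_alpha, vmap_beta]
    have hsv : normSq (sv y) = normSq (qf y) := Complex.normSq_neg _
    simp only [Complex.normSq_one]
    linarith

theorem chart_surj (x : Vn (2 + b)) (hq : qf x = 0) (hh : 0 < hf x) (ht : 0 < tf x) :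
    ∃ y ∈ Om b, ∃ a : ℂ, a ≠ 0 ∧ vmap y = a • x := by
  have hane : x 0 + I * x 1 ≠ 0 := by
    intro h
    unfold tf at ht
    rw [h] at ht
    simp only [Complex.normSq_zero] at ht
    linarith [Complex.normSq_nonneg (x 0 - I * x 1)]
  set a : ℂ := (x 0 + I * x 1)⁻¹ with ha
  have hane' : a ≠ 0 := inv_ne_zero hane
  set w : Vn (2 + b) := a • x with hw
  have hw_apply : ∀ i, w i = a * x i := fun i => rfl
  have hw1 : w 0 + I * w 1 = 1 := by
    rw [hw_apply, hw_apply, ha]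
    field_simp
  set y : Vn (2 + b) := tl w with hy
  have hwy : ∀ i, i ≠ 0 → i ≠ 1 → y i = w i := fun i h0 h1 => tl_other w i h0 h1
  have hqw : qf w = 0 := by rw [hw, qf_smul, hq, mul_zero]
  have hqy : qf y = -(w 0 - I * w 1) := by
    have h1 := qf_eq_of_eq_off w y (fun i h0 h1 => (hwy i h0 h1).symm)
    rw [hy] at h1 ⊢
    rw [tl_0, tl_1, hqw] at h1
    have h2 := sq_add_sq_eq (w 0) (w 1)
    rw [hw1, one_mul] at h2
    linear_combination -h1 - h2
  have hsvy : sv y = w 0 - I * w 1 := by rw [sv, hqy, neg_neg]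
  have htw : tf w = 1 - normSq (sv y) := by
    unfold tf
    rw [hw1, hsvy, Complex.normSq_one]
  have htw' : 0 < tf w := by
    rw [hw, tf_smul]
    have := Complex.normSq_pos.mpr hane'
    positivity
  have hhw : 0 < hf w := by
    rw [hw, hf_smul]
    have := Complex.normSq_pos.mpr hane'
    positivity
  have hfw := hf_eq_of_eq_off w y (fun i h0 h1 => (hwy i h0 h1).symm)
  have hz : hf y = -∑ i, normSq (y i) := by
    rw [hy]; exact hf_of_zero01 _ (tl_0 w) (tl_1 w)
  have hy0 : y 0 = 0 := tl_0 w
  have hy1 : y 1 = 0 := tl_1 w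
  have hpair := normSq_pair (w 0) (w 1)
  rw [hw1] at hpair
  have hnsv : normSq (qf y) = normSq (sv y) := by rw [sv, Complex.normSq_neg]
  have hsvn : normSq (sv y) = normSq (w 0 - I * w 1) := by rw [hsvy]
  refine ⟨y, ⟨hy0, hy1, ?_, ?_⟩, a, hane', ?_⟩
  · rw [hy0, hy1] at hfw
    simp only [Complex.normSq_zero, Complex.normSq_one] at hfw hpair
    linarith
  · linarith
  · funext i
    by_cases hi0 : i = 0
    · rw [hi0, vmap_0, hsvy]
      show _ = w 0
      linear_combination (-(1:ℂ) / 2) * hw1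
    · by_cases hi1 : i = 1
      · rw [hi1, vmap_1, hsvy]
        show _ = w 1
        linear_combination (I / 2) * hw1 + (-(w 1)) * Complex.I_sq
      · rw [vmap_other y i hi0 hi1]
        exact hwy i hi0 hi1

theorem sum_normSq_smul (t : ℝ) (y : Vn (2 + b)) :
    ∑ i, normSq ((t • y) i) = t ^ 2 * ∑ i, normSq (y i) := by
  rw [Finset.mul_sum]
  refine Finset.sum_congr rfl fun i _ => ?_
  have h : (t • y) i = (t : ℂ) * y i := by
    simp [Pi.smul_apply, Complex.real_smul]
  rw [h, Complex.normSq_mul, Complex.normSq_ofReal]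
  ring

theorem qf_real_smul (t : ℝ) (y : Vn (2 + b)) : qf (t • y) = ((t : ℂ)) ^ 2 * qf y := by
  have h : (t • y) = ((t : ℂ)) • y := by
    funext i; simp [Pi.smul_apply, Complex.real_smul]
  rw [h, qf_smul]

theorem zero_mem_Om : (0 : Vn (2 + b)) ∈ Om b := by
  have hq : qf (0 : Vn (2 + b)) = 0 := by
    unfold qf; simp
  refine ⟨rfl, rfl, ?_, ?_⟩ <;> simp [hq]

theorem smul_mem_Om {y : Vn (2 + b)} (hy : y ∈ Om b) {t : ℝ} (h0 : 0 ≤ t) (h1 : t ≤ 1) :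
    t • y ∈ Om b := by
  obtain ⟨hy0, hy1, hlt, hN⟩ := hy
  have hS : (0:ℝ) ≤ ∑ i, normSq (y i) := Finset.sum_nonneg fun i _ => Complex.normSq_nonneg _
  have hN0 : (0:ℝ) ≤ normSq (qf y) := Complex.normSq_nonneg _
  have e1 : ∑ i, normSq ((t • y) i) = t ^ 2 * ∑ i, normSq (y i) := sum_normSq_smul t y
  have e2 : normSq (qf (t • y)) = t ^ 4 * normSq (qf y) := by
    rw [qf_real_smul, Complex.normSq_mul]
    have h : normSq (((t:ℂ)) ^ 2) = t ^ 4 := by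
      rw [pow_two, Complex.normSq_mul, Complex.normSq_ofReal]; ring
    rw [h]
  have ht2 : t ^ 2 ≤ 1 := by nlinarith
  have hpow : t ^ 4 ≤ 1 := by nlinarith [mul_nonneg (sub_nonneg.mpr ht2) (sq_nonneg t)]
  refine ⟨?_, ?_, ?_, ?_⟩
  · show t • y 0 = 0
    rw [hy0, smul_zero]
  · show t • y 1 = 0
    rw [hy1, smul_zero]
  · rw [e1, e2]
    rcases eq_or_lt_of_le h0 with h | h
    · rw [← h]; norm_num
    · have hA : (0:ℝ) < 1 + normSq (qf y) - 2 * ∑ i, normSq (y i) := by linarith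
      have hB : (0:ℝ) ≤ 1 - normSq (qf y) := by linarith
      have hD : (0:ℝ) ≤ 1 - t ^ 2 := by nlinarith
      nlinarith [mul_pos (mul_pos h h) hA, mul_nonneg hD hB,
        mul_nonneg (mul_nonneg hN0 hD) hD]
  · rw [e2]
    nlinarith [mul_nonneg (sub_nonneg.mpr hpow) hN0]

theorem isPreconnected_Om : IsPreconnected (Om b) := by
  have hOm : Om b = ⋃₀ {s : Set (Vn (2 + b)) | ∃ y ∈ Om b, s = segment ℝ 0 y} := by
    ext z
    constructor
    · intro hz
      exact ⟨segment ℝ 0 z, ⟨z, hz, rfl⟩, right_mem_segment ℝ 0 z⟩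
    · rintro ⟨s, ⟨y, hy, rfl⟩, hzs⟩
      rw [segment_eq_image] at hzs
      obtain ⟨θ, hθ, rfl⟩ := hzs
      show (1 - θ) • (0 : Vn (2 + b)) + θ • y ∈ Om b
      have h : (1 - θ) • (0 : Vn (2 + b)) + θ • y = θ • y := by simp
      rw [h]
      exact smul_mem_Om ⟨hy.1, hy.2.1, hy.2.2.1, hy.2.2.2⟩ hθ.1 hθ.2
  rw [hOm]
  refine isPreconnected_sUnion 0 _ ?_ ?_
  · rintro s ⟨y, hy, rfl⟩
    exact left_mem_segment ℝ 0 y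
  · rintro s ⟨y, hy, rfl⟩
    exact (convex_segment 0 y).isPreconnected

theorem continuous_qf : Continuous (qf (b := b)) := by
  unfold qf
  fun_prop

theorem continuous_sv : Continuous (sv (b := b)) := by
  unfold sv
  exact continuous_qf.neg

theorem continuous_vmap : Continuous (vmap (b := b)) := by
  refine continuous_pi fun i => ?_
  simp only [vmap]
  split_ifs
  · exact (continuous_const.add continuous_sv).div_const 2
  · exact ((continuous_sv.sub continuous_const).mul continuous_const).div_const 2
  · exact continuous_apply i

theorem continuous_tf : Continuous (tf (b := b)) := by
  have h1 : Continuous fun x : Vn (2 + b) => x 0 + I * x 1 :=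
    (continuous_apply 0).add (continuous_const.mul (continuous_apply 1))
  have h2 : Continuous fun x : Vn (2 + b) => x 0 - I * x 1 :=
    (continuous_apply 0).sub (continuous_const.mul (continuous_apply 1))
  exact (Complex.continuous_normSq.comp h1).sub (Complex.continuous_normSq.comp h2)

def Ddiag (b : ℕ) : Set (Pn (2 + b)) := {p | qf p.rep = 0 ∧ 0 < hf p.rep}

def Apos (b : ℕ) : Set (Pn (2 + b)) := {p | (qf p.rep = 0 ∧ 0 < hf p.rep) ∧ 0 < tf p.rep}

def Aneg (b : ℕ) : Set (Pn (2 + b)) := {p | (qf p.rep = 0 ∧ 0 < hf p.rep) ∧ tf p.rep < 0}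

theorem conds_smul (a : ℂˣ) (x : Vn (2 + b)) :
    (qf ((a:ℂ) • x) = 0 ↔ qf x = 0) ∧ (0 < hf ((a:ℂ) • x) ↔ 0 < hf x)
      ∧ (0 < tf ((a:ℂ) • x) ↔ 0 < tf x) ∧ (tf ((a:ℂ) • x) < 0 ↔ tf x < 0) := by
  have ha : (a:ℂ) ≠ 0 := a.ne_zero
  have hn : 0 < normSq (a:ℂ) := Complex.normSq_pos.mpr ha
  refine ⟨?_, ?_, ?_, ?_⟩
  · rw [qf_smul]
    constructor
    · intro h
      rcases mul_eq_zero.mp h with h | h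
      · exact absurd h (pow_ne_zero 2 ha)
      · exact h
    · intro h; rw [h, mul_zero]
  · rw [hf_smul]
    constructor
    · intro h
      by_contra h'
      push_neg at h'
      nlinarith
    · intro h; exact mul_pos hn h
  · rw [tf_smul]
    constructor
    · intro h
      by_contra h'
      push_neg at h'
      nlinarith
    · intro h; exact mul_pos hn h
  · rw [tf_smul]
    constructor
    · intro h
      by_contra h'
      push_neg at h'
      nlinarith
    · intro h
      have := mul_pos hn (neg_pos.mpr h)
      nlinarith

theorem mem_Ddiag_mk (x : Vn (2 + b)) (hx : x ≠ 0) :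
    Projectivization.mk ℂ x hx ∈ Ddiag b ↔ (qf x = 0 ∧ 0 < hf x) := by
  obtain ⟨a, ha⟩ := rep_spec x hx
  obtain ⟨c1, c2, _, _⟩ := conds_smul a x
  show (qf (Projectivization.mk ℂ x hx).rep = 0 ∧ _) ↔ _
  rw [ha, c1, c2]

theorem mem_Apos_mk (x : Vn (2 + b)) (hx : x ≠ 0) :
    Projectivization.mk ℂ x hx ∈ Apos b ↔ ((qf x = 0 ∧ 0 < hf x) ∧ 0 < tf x) := by
  obtain ⟨a, ha⟩ := rep_spec x hx
  obtain ⟨c1, c2, c3, _⟩ := conds_smul a x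
  show ((qf (Projectivization.mk ℂ x hx).rep = 0 ∧ _) ∧ _) ↔ _
  rw [ha, c1, c2, c3]

theorem mem_Aneg_mk (x : Vn (2 + b)) (hx : x ≠ 0) :
    Projectivization.mk ℂ x hx ∈ Aneg b ↔ ((qf x = 0 ∧ 0 < hf x) ∧ tf x < 0) := by
  obtain ⟨a, ha⟩ := rep_spec x hx
  obtain ⟨c1, c2, _, c4⟩ := conds_smul a x
  show ((qf (Projectivization.mk ℂ x hx).rep = 0 ∧ _) ∧ _) ↔ _
  rw [ha, c1, c2, c4]

theorem isPreconnected_Apos : IsPreconnected (Apos b) := by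
  have himg : Apos b = (fun y => Projectivization.mk ℂ (vmap y) (vmap_ne y)) '' Om b := by
    ext p
    constructor
    · intro hp
      obtain ⟨⟨hq, hh⟩, ht⟩ := hp
      obtain ⟨y, hy, a, ha, hva⟩ := chart_surj p.rep hq hh ht
      refine ⟨y, hy, ?_⟩
      show Projectivization.mk ℂ (vmap y) (vmap_ne y) = p
      have h1 : Projectivization.mk ℂ (vmap y) (vmap_ne y)
          = Projectivization.mk ℂ p.rep p.rep_nonzero := by
        rw [Projectivization.mk_eq_mk_iff']
        exact ⟨a, hva.symm⟩
      rw [h1, Projectivization.mk_rep]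
    · rintro ⟨y, hy, rfl⟩
      obtain ⟨hq, hh, ht⟩ := chart_mem hy
      exact (mem_Apos_mk _ _).mpr ⟨⟨hq, hh⟩, ht⟩
  rw [himg]
  exact isPreconnected_Om.image _ (continuous_mk vmap continuous_vmap vmap_ne).continuousOn

def Nmat (b : ℕ) : Matrix (Fin (2 + b)) (Fin (2 + b)) ℂ :=
  Matrix.diagonal (fun i => if i = 1 then -1 else 1)

theorem Nmat_mul_self : Nmat b * Nmat b = 1 := by
  unfold Nmat
  rw [Matrix.diagonal_mul_diagonal]
  rw [show (fun i : Fin (2 + b) => (if i = 1 then (-1:ℂ) else 1) * (if i = 1 then -1 else 1))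
    = fun _ => (1:ℂ) from funext fun i => by split_ifs <;> norm_num, Matrix.diagonal_one]

theorem Nmat_mulVec (x : Vn (2 + b)) :
    (Nmat b).mulVec x = fun i => if i = 1 then -x i else x i := by
  funext i
  unfold Nmat
  rw [Matrix.mulVec_diagonal]
  split_ifs <;> ring

theorem qf_N (x : Vn (2 + b)) : qf ((Nmat b).mulVec x) = qf x := by
  rw [Nmat_mulVec]
  unfold qf
  refine Finset.sum_congr rfl fun i _ => ?_
  beta_reduce
  split_ifs <;> ring

theorem hf_N (x : Vn (2 + b)) : hf ((Nmat b).mulVec x) = hf x := by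
  rw [Nmat_mulVec]
  unfold hf
  refine Finset.sum_congr rfl fun i _ => ?_
  beta_reduce
  split_ifs with h
  · rw [Complex.normSq_neg]
  · rfl

theorem tf_N (x : Vn (2 + b)) : tf ((Nmat b).mulVec x) = -tf x := by
  rw [Nmat_mulVec]
  unfold tf
  beta_reduce
  rw [if_neg (fin0ne1 (b := b)), if_pos (rfl : (1 : Fin (2 + b)) = 1)]
  have e1 : x 0 + I * (-x 1) = x 0 - I * x 1 := by ring
  have e2 : x 0 - I * (-x 1) = x 0 + I * x 1 := by ring
  rw [e1, e2]
  ring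

theorem hinjN : ∀ x : Vn (2 + b), (Nmat b).mulVec x = 0 → x = 0 :=
  fun x hx => mulVec_inj Nmat_mul_self x hx

theorem pmapN_mem_Apos (p : Pn (2 + b)) :
    pmap (Nmat b) hinjN p ∈ Apos b ↔ p ∈ Aneg b := by
  induction p using Projectivization.ind with
  | h x hx =>
    rw [pmap_mk, mem_Apos_mk, mem_Aneg_mk, qf_N, hf_N, tf_N]
    simp [neg_pos]

theorem pmapN_mem_Aneg (p : Pn (2 + b)) :
    pmap (Nmat b) hinjN p ∈ Aneg b ↔ p ∈ Apos b := by
  induction p using Projectivization.ind with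
  | h x hx =>
    rw [pmap_mk, mem_Apos_mk, mem_Aneg_mk, qf_N, hf_N, tf_N]
    simp [neg_lt_zero]

theorem pmapN_invol (p : Pn (2 + b)) : pmap (Nmat b) hinjN (pmap (Nmat b) hinjN p) = p := by
  induction p using Projectivization.ind with
  | h x hx =>
    rw [pmap_mk, pmap_mk]
    have hv : (Nmat b).mulVec ((Nmat b).mulVec x) = x := by
      rw [Matrix.mulVec_mulVec, Nmat_mul_self, Matrix.one_mulVec]
    exact (Projectivization.mk_eq_mk_iff ℂ _ _ _ hx).mpr ⟨1, by simp [hv]⟩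

theorem Aneg_eq_image : Aneg b = (pmap (Nmat b) hinjN) '' Apos b := by
  ext p
  constructor
  · intro hp
    exact ⟨pmap (Nmat b) hinjN p, (pmapN_mem_Apos p).mpr hp, pmapN_invol p⟩
  · rintro ⟨q, hq, rfl⟩
    exact (pmapN_mem_Aneg q).mpr hq

theorem isPreconnected_Aneg : IsPreconnected (Aneg b) := by
  rw [Aneg_eq_image]
  exact isPreconnected_Apos.image _ (continuous_pmap _ _).continuousOn

theorem isOpen_tf_pos : IsOpen {p : Pn (2 + b) | 0 < tf p.rep} := by
  refine isOpen_invariant (S := {x | 0 < tf x}) ?_ ?_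
  · exact isOpen_lt continuous_const continuous_tf
  · intro x a hx
    exact ((conds_smul a x).2.2.1).mpr hx

theorem isOpen_tf_neg : IsOpen {p : Pn (2 + b) | tf p.rep < 0} := by
  refine isOpen_invariant (S := {x | tf x < 0}) ?_ ?_
  · exact isOpen_lt continuous_tf continuous_const
  · intro x a hx
    exact ((conds_smul a x).2.2.2).mpr hx

theorem apos_nonempty : (Apos b).Nonempty := by
  refine ⟨Projectivization.mk ℂ (vmap 0) (vmap_ne 0), ?_⟩
  rw [mem_Apos_mk]
  obtain ⟨hq, hh, ht⟩ := chart_mem (zero_mem_Om (b := b))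
  exact ⟨⟨hq, hh⟩, ht⟩

theorem aneg_nonempty : (Aneg b).Nonempty := by
  obtain ⟨p, hp⟩ := apos_nonempty (b := b)
  exact ⟨pmap (Nmat b) hinjN p, (pmapN_mem_Aneg p).mpr hp⟩

theorem card_Ddiag : Nat.card (ConnectedComponents (Ddiag b)) = 2 := by
  have hsub : ∀ p : Pn (2 + b), p ∈ Ddiag b → tf p.rep ≠ 0 := fun p hp =>
    tf_ne p.rep hp.1 hp.2
  refine cc_card_two (A := (Subtype.val ⁻¹' (Apos b) : Set (Ddiag b)))
    (Bs := (Subtype.val ⁻¹' (Aneg b) : Set (Ddiag b))) ?_ ?_ ?_ ?_ ?_ ?_ ?_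
  · rintro ⟨p, hp⟩
    constructor
    · intro hA hB
      exact absurd hA.2 (not_lt.mpr (le_of_lt hB.2))
    · intro hB
      rcases lt_or_gt_of_ne (hsub p hp) with h | h
      · exact absurd ⟨hp, h⟩ hB
      · exact ⟨hp, h⟩
  · have : (Subtype.val ⁻¹' (Apos b) : Set (Ddiag b))
        = Subtype.val ⁻¹' {p : Pn (2 + b) | 0 < tf p.rep} := by
      ext ⟨p, hp⟩
      simp only [Set.mem_preimage, Set.mem_setOf_eq]
      exact ⟨fun h => h.2, fun h => ⟨hp, h⟩⟩
    rw [this]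
    exact isOpen_tf_pos.preimage continuous_subtype_val
  · have : (Subtype.val ⁻¹' (Aneg b) : Set (Ddiag b))
        = Subtype.val ⁻¹' {p : Pn (2 + b) | tf p.rep < 0} := by
      ext ⟨p, hp⟩
      simp only [Set.mem_preimage, Set.mem_setOf_eq]
      exact ⟨fun h => h.2, fun h => ⟨hp, h⟩⟩
    rw [this]
    exact isOpen_tf_neg.preimage continuous_subtype_val
  · rw [← IsInducing.subtypeVal.isPreconnected_image]
    have : Subtype.val '' ((Subtype.val ⁻¹' (Apos b)) : Set (Ddiag b)) = Apos b := by
      rw [Subtype.image_preimage_coe]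
      exact Set.inter_eq_right.mpr fun p hp => hp.1
    rw [this]
    exact isPreconnected_Apos
  · rw [← IsInducing.subtypeVal.isPreconnected_image]
    have : Subtype.val '' ((Subtype.val ⁻¹' (Aneg b)) : Set (Ddiag b)) = Aneg b := by
      rw [Subtype.image_preimage_coe]
      exact Set.inter_eq_right.mpr fun p hp => hp.1
    rw [this]
    exact isPreconnected_Aneg
  · obtain ⟨p, hp⟩ := apos_nonempty (b := b)
    exact ⟨⟨p, hp.1⟩, hp⟩
  · obtain ⟨p, hp⟩ := aneg_nonempty (b := b)
    exact ⟨⟨p, hp.1⟩, hp⟩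

end Diag

section Main

def DM {n : ℕ} (Mc : Matrix (Fin n) (Fin n) ℂ) : Set (Pn n) :=
  {p | B Mc p.rep p.rep = 0 ∧ 0 < (B Mc p.rep (star p.rep)).re}

theorem B_self_smul {n : ℕ} (Mc : Matrix (Fin n) (Fin n) ℂ) (a : ℂ) (x : Vn n) :
    B Mc (a • x) (a • x) = a ^ 2 * B Mc x x := by
  rw [B_smul_left, B_smul_right]; ring

theorem mem_DM_mk {n : ℕ} (Mc : Matrix (Fin n) (Fin n) ℂ) (x : Vn n) (hx : x ≠ 0) :
    Projectivization.mk ℂ x hx ∈ DM Mc ↔ (B Mc x x = 0 ∧ 0 < (B Mc x (star x)).re) := by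
  obtain ⟨a, ha⟩ := rep_spec x hx
  show (B Mc _ _ = 0 ∧ 0 < (B Mc _ (star _)).re) ↔ _
  rw [ha, B_self_smul, B_star_smul]
  have ha2 : (a : ℂ) ^ 2 ≠ 0 := pow_ne_zero _ a.ne_zero
  have hn : 0 < normSq (a : ℂ) := Complex.normSq_pos.mpr a.ne_zero
  constructor
  · rintro ⟨h1, h2⟩
    refine ⟨?_, ?_⟩
    · rcases mul_eq_zero.mp h1 with h | h
      · exact absurd h ha2
      · exact h
    · rw [Complex.re_ofReal_mul] at h2
      nlinarith
  · rintro ⟨h1, h2⟩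
    refine ⟨by rw [h1, mul_zero], ?_⟩
    rw [Complex.re_ofReal_mul]
    exact mul_pos hn h2

theorem B_conj {n : ℕ} (A M : Matrix (Fin n) (Fin n) ℂ) (x y : Vn n) :
    B M (A.mulVec x) (A.mulVec y) = B (A.transpose * M * A) x y := by
  unfold B
  rw [← Matrix.mulVec_mulVec, ← Matrix.mulVec_mulVec, Matrix.dotProduct_mulVec x,
    Matrix.vecMul_transpose]

theorem star_mulVec_real {n : ℕ} (R : Matrix (Fin n) (Fin n) ℝ) (x : Vn n) :
    star ((R.map (Complex.ofReal)).mulVec x) = (R.map Complex.ofReal).mulVec (star x) := by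
  funext i
  simp only [Pi.star_apply, Matrix.mulVec, dotProduct, Matrix.map_apply,
    Complex.star_def, map_sum, _root_.map_mul, Complex.conj_ofReal]

theorem map_mul_ofReal {n : ℕ} (A C : Matrix (Fin n) (Fin n) ℝ) :
    (A * C).map (Complex.ofReal) = A.map Complex.ofReal * C.map Complex.ofReal := by
  ext i j
  simp [Matrix.mul_apply, Matrix.map_apply]

theorem map_one_ofReal {n : ℕ} :
    (1 : Matrix (Fin n) (Fin n) ℝ).map Complex.ofReal = 1 := by
  ext i j
  simp [Matrix.map_apply, Matrix.one_apply, apply_ite Complex.ofReal]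

theorem map_transpose_ofReal {n : ℕ} (A : Matrix (Fin n) (Fin n) ℝ) :
    (A.transpose).map Complex.ofReal = (A.map Complex.ofReal).transpose := by
  ext i j
  simp [Matrix.map_apply, Matrix.transpose_apply]

theorem map_diag_ofReal {b : ℕ} :
    (Matrix.diagonal (fun i : Fin (2 + b) => if (i : ℕ) < 2 then (1 : ℝ) else -1)).map
      Complex.ofReal = Mdiag b := by
  rw [Matrix.diagonal_map Complex.ofReal_zero]
  unfold Mdiag
  refine congrArg Matrix.diagonal ?_
  funext i
  show ((if (i : ℕ) < 2 then (1 : ℝ) else -1 : ℝ) : ℂ) = dd b i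
  unfold dd
  rw [apply_ite Complex.ofReal]
  simp

end Main

end

end Stmt3Aux

open Stmt3Aux

/-- The period domain: let `V = ℝ^{2+b}` carry a symmetric bilinear form of signature
`(2, b)` (given by the matrix `M`), extended `ℂ`-bilinearly to `V ⊗ ℂ`.  Then
`D^± = {[x] ∈ P(V ⊗ ℂ) : (x,x) = 0, (x,x̄) > 0}` is a nonempty open subset of the quadric
`{(x,x) = 0}`, and has exactly two connected components when `b ≥ 1`. -/
theorem stmt_3 (b : ℕ) (M : Matrix (Fin (2 + b)) (Fin (2 + b)) ℝ) (hsymm : M.IsSymm)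
    (hsig : HasSignature M 2 b) :
    ∀ (Mc : Matrix (Fin (2 + b)) (Fin (2 + b)) ℂ), Mc = M.map (Complex.ofReal) →
    ∀ (Q Dpm : Set (Projectivization ℂ (Fin (2 + b) → ℂ))),
    Q = {p | dotProduct p.rep (Mc.mulVec p.rep) = 0} →
    Dpm = {p | dotProduct p.rep (Mc.mulVec p.rep) = 0 ∧
      0 < (dotProduct p.rep (Mc.mulVec (star p.rep))).re} →
    Dpm.Nonempty ∧
    IsOpen {y : ↥Q | (y : Projectivization ℂ (Fin (2 + b) → ℂ)) ∈ Dpm} ∧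
    (1 ≤ b → Nat.card (ConnectedComponents ↥Dpm) = 2) := by

  intro Mc hMc Q Dpm hQ hDpm
  obtain ⟨hpq, P, hPdet, hPtr⟩ := hsig
  have hDpm' : Dpm = DM Mc := hDpm
  set Pc := P.map Complex.ofReal with hPcdef
  set Pc' := (P⁻¹).map Complex.ofReal with hPc'def
  have hPP' : Pc * Pc' = 1 := by
    rw [hPcdef, hPc'def, ← map_mul_ofReal, Matrix.mul_nonsing_inv P hPdet, map_one_ofReal]
  have hP'P : Pc' * Pc = 1 := by
    rw [hPcdef, hPc'def, ← map_mul_ofReal, Matrix.nonsing_inv_mul P hPdet, map_one_ofReal]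
  have hMd : Pc.transpose * Mc * Pc = Mdiag b := by
    rw [hMc, hPcdef, ← map_transpose_ofReal, ← map_mul_ofReal, ← map_mul_ofReal, hPtr,
      map_diag_ofReal]
  have hBtr : ∀ x y : Vn (2 + b), B Mc (Pc.mulVec x) (Pc.mulVec y) = B (Mdiag b) x y :=
    fun x y => by rw [B_conj, hMd]
  have hstar : ∀ x : Vn (2 + b), star (Pc.mulVec x) = Pc.mulVec (star x) := fun x => by
    rw [hPcdef]; exact star_mulVec_real P x
  set Φ := pmapHomeo Pc Pc' hPP' hP'P with hPhi
  have hfwd : ∀ q, q ∈ Ddiag b → Φ q ∈ DM Mc := by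
    intro q
    induction q using Projectivization.ind with
    | h x hx =>
      intro hq
      rw [mem_Ddiag_mk] at hq
      rw [hPhi, pmapHomeo_mk, mem_DM_mk]
      refine ⟨?_, ?_⟩
      · rw [hBtr, B_Mdiag_self]; exact hq.1
      · rw [hstar, hBtr, B_Mdiag_star_re]; exact hq.2
  have hback : ∀ p, p ∈ DM Mc → Φ.symm p ∈ Ddiag b := by
    intro p
    induction p using Projectivization.ind with
    | h z hz =>
      intro hp
      rw [mem_DM_mk] at hp
      have hzz : Pc.mulVec (Pc'.mulVec z) = z := by
        rw [Matrix.mulVec_mulVec, hPP', Matrix.one_mulVec]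
      have hshow : Φ.symm (Projectivization.mk ℂ z hz)
          = Projectivization.mk ℂ (Pc'.mulVec z) (fun h => hz (mulVec_inj hPP' _ h)) := rfl
      rw [hshow, mem_Ddiag_mk]
      constructor
      · have h1 := hBtr (Pc'.mulVec z) (Pc'.mulVec z)
        rw [hzz, B_Mdiag_self] at h1
        exact h1.symm.trans hp.1
      · have h2 : B Mc z (star z) = B (Mdiag b) (Pc'.mulVec z) (star (Pc'.mulVec z)) := by
          conv_lhs => rw [← hzz]
          rw [hstar, hBtr]
        rw [← B_Mdiag_star_re, ← h2]
        exact hp.2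
  have himg : Φ '' (Ddiag b) = Dpm := by
    rw [hDpm']
    ext p
    constructor
    · rintro ⟨q, hq, rfl⟩
      exact hfwd q hq
    · intro hp
      exact ⟨Φ.symm p, hback p hp, Φ.apply_symm_apply p⟩
  refine ⟨?_, ?_, ?_⟩
  · have hmem : Projectivization.mk ℂ (vmap 0) (vmap_ne 0) ∈ Ddiag b := by
      rw [mem_Ddiag_mk]
      obtain ⟨h1, h2, _⟩ := chart_mem (zero_mem_Om (b := b))
      exact ⟨h1, h2⟩
    exact ⟨Φ (Projectivization.mk ℂ (vmap 0) (vmap_ne 0)), himg ▸ ⟨_, hmem, rfl⟩⟩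
  · have hU : IsOpen {p : Pn (2 + b) | 0 < (B Mc p.rep (star p.rep)).re} := by
      have h1 : IsOpen {x : Vn (2 + b) | 0 < (B Mc x (star x)).re} :=
        isOpen_lt continuous_const (Complex.continuous_re.comp (continuous_B_star Mc))
      have h2 : ∀ (x : Vn (2 + b)) (a : ℂˣ), x ∈ {x : Vn (2 + b) | 0 < (B Mc x (star x)).re} →
          (a : ℂ) • x ∈ {x : Vn (2 + b) | 0 < (B Mc x (star x)).re} := by
        intro x a hx
        show 0 < (B Mc ((a:ℂ) • x) (star ((a:ℂ) • x))).re
        rw [B_star_smul, Complex.re_ofReal_mul]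
        exact mul_pos (Complex.normSq_pos.mpr a.ne_zero) hx
      exact isOpen_invariant h1 h2
    have hset : {y : ↥Q | (y : Projectivization ℂ (Fin (2 + b) → ℂ)) ∈ Dpm}
        = Subtype.val ⁻¹' {p : Pn (2 + b) | 0 < (B Mc p.rep (star p.rep)).re} := by
      ext ⟨p, hp⟩
      rw [hQ] at hp
      simp only [Set.mem_setOf_eq, Set.mem_preimage]
      rw [hDpm]
      exact ⟨fun h => h.2, fun h => ⟨hp, h⟩⟩
    rw [hset]
    exact hU.preimage continuous_subtype_val
  · intro _
    have e1 : (Ddiag b) ≃ₜ (Dpm) :=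
      (Homeomorph.image Φ (Ddiag b)).trans (Homeomorph.setCongr himg)
    rw [← cc_card_eq e1]
    exact card_Ddiag
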